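/- Let κ be strongly inaccessible, b' : κ → κ increasing with b'(α) an infinite cardinal for all α, and h : κ → κ increasing with h(α) a cardinal and 2 ≤ h(α) < κ for all α. Then there exists b : κ → κ, increasing with b(α) an infinite cardinal less than κ for all α, such that there is a Tukey connection AL_{b,h} ⪯ ED_{b'}; consequently d_κ^{b,h}(∌^∞) ≤ d_κ^{b'}(≠^∞) and b_κ^{b'}(≠^∞) ≤ b_κ^{b,h}(∌^∞). -/

import Mathlib

open Cardinal Set

namespace BGBS

/-- `P` holds for almost all `α < κ`, i.e. for all `α` above some `β < κ`. -/
def AlmostAll (κ : Ordinal.{0}) (P : Ordinal.{0} → Prop) : Prop :=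
  ∃ β < κ, ∀ α, β < α → α < κ → P α

/-- `P` holds for cofinally many `α < κ`. -/
def Cofinally (κ : Ordinal.{0}) (P : Ordinal.{0} → Prop) : Prop :=
  ∀ β < κ, ∃ α, β < α ∧ α < κ ∧ P α

/-- The set `{α < κ | P α}` is bounded in `κ`. -/
def BoundedIn (κ : Ordinal.{0}) (P : Ordinal.{0} → Prop) : Prop :=
  ∃ β < κ, ∀ α, α < κ → P α → α < β

/-- An ordinal which is (the initial ordinal of) an infinite cardinal. -/
def IsInfCard (o : Ordinal.{0}) : Prop := o.card.ord = o ∧ ℵ₀ ≤ o.card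

/-- An ordinal which is (the initial ordinal of) a cardinal. -/
def IsCardOrd (o : Ordinal.{0}) : Prop := o.card.ord = o

/-- The bounded product space `∏ b`: functions on `κ` with `f α < b α`
(and value `0` outside of `κ`, for definiteness). -/
def prodSet (κ : Ordinal.{0}) (b : Ordinal.{0} → Ordinal.{0}) :
    Set (Ordinal.{0} → Ordinal.{0}) :=
  {f | ∀ α, (α < κ → f α < b α) ∧ (¬ α < κ → f α = 0)}

/-- `f ≤* g` : `f α ≤ g α` for almost all `α < κ`. -/
def leStar (κ : Ordinal.{0}) (f g : Ordinal.{0} → Ordinal.{0}) : Prop :=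
  AlmostAll κ fun α => f α ≤ g α

/-- `f α ≠ g α` for almost all `α < κ` (eventual difference). -/
def neStar (κ : Ordinal.{0}) (f g : Ordinal.{0} → Ordinal.{0}) : Prop :=
  AlmostAll κ fun α => f α ≠ g α

/-- `f =^∞ g` : `f α = g α` for cofinally many `α < κ`. -/
def eqInfty (κ : Ordinal.{0}) (f g : Ordinal.{0} → Ordinal.{0}) : Prop :=
  Cofinally κ fun α => f α = g α

/-- The set of `(b,h)`-slaloms: `φ α ⊆ b α` and `|φ α| < h α` for `α < κ`
(and `φ α = ∅` outside of `κ`, for definiteness). -/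
def slalomSet (κ : Ordinal.{0}) (b h : Ordinal.{0} → Ordinal.{0}) :
    Set (Ordinal.{0} → Set Ordinal.{0}) :=
  {φ | ∀ α, (α < κ → φ α ⊆ Iio (b α) ∧ #(φ α) < Cardinal.lift.{1} (h α).card)
      ∧ (¬ α < κ → φ α = ∅)}

/-- `f ∈* φ` : `f α ∈ φ α` for almost all `α < κ`. -/
def inStar (κ : Ordinal.{0}) (f : Ordinal.{0} → Ordinal.{0})
    (φ : Ordinal.{0} → Set Ordinal.{0}) : Prop :=
  AlmostAll κ fun α => f α ∈ φ α

/-- `f ∈^∞ φ` : `f α ∈ φ α` for cofinally many `α < κ`. -/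
def inInfty (κ : Ordinal.{0}) (f : Ordinal.{0} → Ordinal.{0})
    (φ : Ordinal.{0} → Set Ordinal.{0}) : Prop :=
  Cofinally κ fun α => f α ∈ φ α

/-- `f α ∉ φ α` for almost all `α < κ` (the antilocalisation relation). -/
def notInStar (κ : Ordinal.{0}) (φ : Ordinal.{0} → Set Ordinal.{0})
    (f : Ordinal.{0} → Ordinal.{0}) : Prop :=
  AlmostAll κ fun α => f α ∉ φ α

/-- The norm of the relational system `⟨Xs, Ys, R⟩`: the least cardinality of a
set `W ⊆ Ys` such that every `x ∈ Xs` is `R`-related to some member of `W`. -/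
noncomputable def normOf {X : Type*} {Y : Type*} (Xs : Set X) (Ys : Set Y)
    (R : X → Y → Prop) : Cardinal :=
  sInf { c | ∃ W, W ⊆ Ys ∧ (∀ x ∈ Xs, ∃ y ∈ W, R x y) ∧ c = #W }

/-- A Tukey connection between set-based relational systems. -/
def Tukey {X Y X' Y' : Type*} (Xs : Set X) (Ys : Set Y) (R : X → Y → Prop)
    (Xs' : Set X') (Ys' : Set Y') (R' : X' → Y' → Prop) : Prop :=
  ∃ (ρm : X → X') (ρp : Y' → Y),
    (∀ x ∈ Xs, ρm x ∈ Xs') ∧ (∀ y' ∈ Ys', ρp y' ∈ Ys) ∧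
    ∀ x ∈ Xs, ∀ y' ∈ Ys', R' (ρm x) y' → R x (ρp y')

/-- The dominating number `d_κ^b(≤*)`. -/
noncomputable def dLeq (κ : Ordinal.{0}) (b : Ordinal.{0} → Ordinal.{0}) : Cardinal.{1} :=
  normOf (prodSet κ b) (prodSet κ b) (leStar κ)

/-- The unbounding number `b_κ^b(≤*)`. -/
noncomputable def bLeq (κ : Ordinal.{0}) (b : Ordinal.{0} → Ordinal.{0}) : Cardinal.{1} :=
  normOf (prodSet κ b) (prodSet κ b) fun g f => ¬ leStar κ f g

/-- The eventual difference number `d_κ^b(≠^∞)`. -/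
noncomputable def dNeq (κ : Ordinal.{0}) (b : Ordinal.{0} → Ordinal.{0}) : Cardinal.{1} :=
  normOf (prodSet κ b) (prodSet κ b) (neStar κ)

/-- The cofinal equality number `b_κ^b(≠^∞)`. -/
noncomputable def bNeq (κ : Ordinal.{0}) (b : Ordinal.{0} → Ordinal.{0}) : Cardinal.{1} :=
  normOf (prodSet κ b) (prodSet κ b) fun g f => eqInfty κ g f

/-- The localisation number `d_κ^{b,h}(∈*)`. -/
noncomputable def dLoc (κ : Ordinal.{0}) (b h : Ordinal.{0} → Ordinal.{0}) : Cardinal.{1} :=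
  normOf (prodSet κ b) (slalomSet κ b h) (inStar κ)

/-- The avoidance number `b_κ^{b,h}(∈*)`. -/
noncomputable def bLoc (κ : Ordinal.{0}) (b h : Ordinal.{0} → Ordinal.{0}) : Cardinal.{1} :=
  normOf (slalomSet κ b h) (prodSet κ b) fun φ f => ¬ inStar κ f φ

/-- The anti-avoidance number `d_κ^{b,h}(∌^∞)`. -/
noncomputable def dAntiLoc (κ : Ordinal.{0}) (b h : Ordinal.{0} → Ordinal.{0}) : Cardinal.{1} :=
  normOf (slalomSet κ b h) (prodSet κ b) (notInStar κ)

/-- The antilocalisation number `b_κ^{b,h}(∌^∞)`. -/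
noncomputable def bAntiLoc (κ : Ordinal.{0}) (b h : Ordinal.{0} → Ordinal.{0}) : Cardinal.{1} :=
  normOf (prodSet κ b) (slalomSet κ b h) (inInfty κ)

/-- `b` is increasing (below `κ`). -/
def IncreasingOn (κ : Ordinal.{0}) (b : Ordinal.{0} → Ordinal.{0}) : Prop :=
  ∀ α β, α ≤ β → β < κ → b α ≤ b β

/-- `f` is continuous at every limit ordinal of `A` (below `κ`). -/
def ContinuousOn (κ : Ordinal.{0}) (f : Ordinal.{0} → Ordinal.{0}) (A : Set Ordinal.{0}) : Prop :=
  ∀ γ ∈ A, γ < κ → Order.IsSuccLimit γ → f γ = sSup (f '' Iio γ)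

/-- `f` is discontinuous at every limit ordinal of `A` (below `κ`). -/
def DiscontinuousOn (κ : Ordinal.{0}) (f : Ordinal.{0} → Ordinal.{0}) (A : Set Ordinal.{0}) : Prop :=
  ∀ γ ∈ A, γ < κ → Order.IsSuccLimit γ → sSup (f '' Iio γ) < f γ

/-- `C` is club in `κ`: unbounded, and containing the supremum of each of its
bounded nonempty subsets without a maximum. -/
def IsClubIn (C : Set Ordinal.{0}) (κ : Ordinal.{0}) : Prop :=
  C ⊆ Iio κ ∧ (∀ β < κ, ∃ α ∈ C, β < α) ∧
    ∀ S, S ⊆ C → S.Nonempty → (∃ β < κ, ∀ x ∈ S, x ≤ β) → sSup S ∉ S → sSup S ∈ C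

/-- `S` is stationary in `κ`: it meets every club subset of `κ`. -/
def IsStationaryIn (S : Set Ordinal.{0}) (κ : Ordinal.{0}) : Prop :=
  S ⊆ Iio κ ∧ ∀ C, IsClubIn C κ → (S ∩ C).Nonempty

/-- An almost disjoint family in `∏ b`. -/
def AlmostDisjointFamily (κ : Ordinal.{0}) (b : Ordinal.{0} → Ordinal.{0})
    (A : Set (Ordinal.{0} → Ordinal.{0})) : Prop :=
  A ⊆ prodSet κ b ∧ ∀ f ∈ A, ∀ g ∈ A, f ≠ g → AlmostAll κ fun α => f α ≠ g α


section Aux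

/-- Monotonicity of `normOf` along a Tukey connection (given that the target
system admits at least one covering family). -/
theorem normOf_le_of_tukey {X X' : Type*} {Y Y' : Type u} {Xs : Set X} {Ys : Set Y}
    {R : X → Y → Prop} {Xs' : Set X'} {Ys' : Set Y'} {R' : X' → Y' → Prop}
    (hT : Tukey Xs Ys R Xs' Ys' R')
    (hne : ∃ W', W' ⊆ Ys' ∧ ∀ x ∈ Xs', ∃ y ∈ W', R' x y) :
    normOf Xs Ys R ≤ normOf Xs' Ys' R' := by
  obtain ⟨ρm, ρp, hm, hp, himp⟩ := hT
  have hS' : {c | ∃ W, W ⊆ Ys' ∧ (∀ x ∈ Xs', ∃ y ∈ W, R' x y) ∧ c = #W}.Nonempty := by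
    obtain ⟨W', h1, h2⟩ := hne
    exact ⟨#W', W', h1, h2, rfl⟩
  obtain ⟨W', hsub, hcov, heq⟩ := csInf_mem hS'
  have h1 : normOf Xs Ys R ≤ #(ρp '' W') := by
    apply csInf_le'
    refine ⟨ρp '' W', ?_, ?_, rfl⟩
    · rintro y ⟨y', hy', rfl⟩
      exact hp y' (hsub hy')
    · intro x hx
      obtain ⟨y', hy', hr⟩ := hcov (ρm x) (hm x hx)
      exact ⟨ρp y', ⟨y', hy', rfl⟩, himp x hx y' (hsub hy') hr⟩
  have h2 : normOf Xs' Ys' R' = #W' := heq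
  exact h1.trans (h2 ▸ Cardinal.mk_image_le)

theorem not_almostAll_iff {κ : Ordinal.{0}} {P : Ordinal.{0} → Prop} :
    ¬ AlmostAll κ P ↔ Cofinally κ (fun α => ¬ P α) := by
  simp only [AlmostAll, Cofinally, not_exists]
  push_neg
  rfl

theorem cofinally_not_almostAll {κ : Ordinal.{0}} {P : Ordinal.{0} → Prop}
    (hc : Cofinally κ P) : ¬ AlmostAll κ (fun α => ¬ P α) := by
  rintro ⟨β, hβ, hall⟩
  obtain ⟨α, h1, h2, h3⟩ := hc β hβ
  exact hall α h1 h2 h3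

end Aux


/-- A function coding one block of values below `b'` (of length `h α`,
starting at position `h α * α`). -/
def InBlock (b' h : Ordinal.{0} → Ordinal.{0}) (α : Ordinal.{0})
    (y : Ordinal.{0} → Ordinal.{0}) : Prop :=
  ∀ ζ, (ζ < h α → y ζ < b' (h α * α + ζ)) ∧ (¬ ζ < h α → y ζ = 0)

/-- For any `b'` and any `h` with `2 ≤ h α < κ` there exists `b` such that
`AL_{b,h} ⪯ ED_{b'}`; consequently `d_κ^{b,h}(∌^∞) ≤ d_κ^{b'}(≠^∞)` and
`b_κ^{b'}(≠^∞) ≤ b_κ^{b,h}(∌^∞)`. -/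
theorem stmt15 (κ : Cardinal.{0}) (hκ : κ.IsInaccessible)
    (b' : Ordinal.{0} → Ordinal.{0}) (hb'inc : IncreasingOn κ.ord b')
    (hb' : ∀ α < κ.ord, b' α < κ.ord ∧ IsInfCard (b' α))
    (h : Ordinal.{0} → Ordinal.{0}) (hhinc : IncreasingOn κ.ord h)
    (hh : ∀ α < κ.ord, IsCardOrd (h α) ∧ 2 ≤ h α ∧ h α < κ.ord) :
    ∃ b : Ordinal.{0} → Ordinal.{0}, IncreasingOn κ.ord b ∧
      (∀ α < κ.ord, b α < κ.ord ∧ IsInfCard (b α)) ∧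
      Tukey (slalomSet κ.ord b h) (prodSet κ.ord b) (notInStar κ.ord)
        (prodSet κ.ord b') (prodSet κ.ord b') (neStar κ.ord) ∧
      dAntiLoc κ.ord b h ≤ dNeq κ.ord b' ∧
      bNeq κ.ord b' ≤ bAntiLoc κ.ord b h := by
  classical
  obtain ⟨hκℵlt, hκreg, hκsl⟩ := hκ
  have hℵ : ℵ₀ ≤ κ := hκℵlt.le
  have hκolim : Order.IsSuccLimit κ.ord := Cardinal.isSuccLimit_ord hℵ
  have hκopos : (0:Ordinal) < κ.ord := by simpa using hκolim.bot_lt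
  have hmul_lt : ∀ {x y : Ordinal.{0}}, x < κ.ord → y < κ.ord → x * y < κ.ord := by
    intro x y hx hy
    rw [Cardinal.lt_ord] at hx hy ⊢
    rw [Ordinal.card_mul]
    exact Cardinal.mul_lt_of_lt hℵ hx hy
  have hadd_lt : ∀ {x y : Ordinal.{0}}, x < κ.ord → y < κ.ord → x + y < κ.ord := by
    intro x y hx hy
    rw [Cardinal.lt_ord] at hx hy ⊢
    rw [Ordinal.card_add]
    exact Cardinal.add_lt_of_lt hℵ hx hy
  have hh2 : ∀ {α}, α < κ.ord → (2:Ordinal) ≤ h α := fun hα => (hh _ hα).2.1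
  have hhlt : ∀ {α}, α < κ.ord → h α < κ.ord := fun hα => (hh _ hα).2.2
  have hh1 : ∀ {α}, α < κ.ord → (1:Ordinal) ≤ h α := fun hα => le_trans one_le_two (hh2 hα)
  have hb'lt : ∀ {i}, i < κ.ord → b' i < κ.ord := fun hi => (hb' _ hi).1
  have hb'inf : ∀ {i}, i < κ.ord → ℵ₀ ≤ (b' i).card := fun hi => (hb' _ hi).2.2
  have hb'one : ∀ {i}, i < κ.ord → (1:Ordinal) < b' i := by
    intro i hi
    have h1 : (ℵ₀ : Cardinal).ord ≤ ((b' i).card).ord := Cardinal.ord_le_ord.2 (hb'inf hi)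
    rw [(hb' _ hi).2.1] at h1
    calc (1:Ordinal) < Ordinal.omega0 := Ordinal.one_lt_omega0
      _ = (ℵ₀ : Cardinal).ord := (Cardinal.ord_aleph0).symm
      _ ≤ b' i := h1
  have hb'pos : ∀ {i}, i < κ.ord → (0:Ordinal) < b' i :=
    fun hi => lt_trans zero_lt_one (hb'one hi)
  -- block arithmetic
  have hblock_lt : ∀ {α ζ : Ordinal.{0}}, α < κ.ord → ζ ≤ h α → h α * α + ζ < κ.ord := by
    intro α ζ hα hζ
    exact hadd_lt (hmul_lt (hhlt hα) hα) (lt_of_le_of_lt hζ (hhlt hα))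
  have hblock_mono : ∀ {α β : Ordinal.{0}}, α ≤ β → β < κ.ord →
      h α * α + h α ≤ h β * β + h β := by
    intro α β hab hβ
    have h1 : h α ≤ h β := hhinc α β hab hβ
    exact add_le_add (le_trans (mul_le_mul_left h1 α) (mul_le_mul_right hab (h β))) h1
  have hblock_sep : ∀ {α β ζ : Ordinal.{0}}, α < β → β < κ.ord → ζ < h α →
      h α * α + ζ < h β * β := by
    intro α β ζ hab hβ hζ
    calc h α * α + ζ < h α * α + h α := add_lt_add_right hζ _
      _ = h α * Order.succ α := (Ordinal.mul_succ _ _).symm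
      _ ≤ h β * Order.succ α := mul_le_mul_left (hhinc α β hab.le hβ) _
      _ ≤ h β * β := mul_le_mul_right (Order.succ_le_of_lt hab) _
  have hblock_unique : ∀ {α β ζ ξ : Ordinal.{0}}, α < κ.ord → β < κ.ord → ζ < h α → ξ < h β →
      h α * α + ζ = h β * β + ξ → α = β ∧ ζ = ξ := by
    intro α β ζ ξ hα hβ hζ hξ heq
    have hαβ : α = β := by
      rcases lt_trichotomy α β with hlt | he | hgt
      · exact absurd heq
          (ne_of_lt (lt_of_lt_of_le (hblock_sep hlt hβ hζ) le_self_add))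
      · exact he
      · exact absurd heq.symm
          (ne_of_lt (lt_of_lt_of_le (hblock_sep hgt hα hξ) le_self_add))
    subst hαβ
    exact ⟨rfl, add_left_cancel heq⟩
  have hα_le_block : ∀ {α : Ordinal.{0}}, α < κ.ord → α ≤ h α * α := by
    intro α hα
    calc α = 1 * α := (one_mul α).symm
      _ ≤ h α * α := mul_le_mul_left (hh1 hα) α
  -- the bounding function b
  set b : Ordinal.{0} → Ordinal.{0} :=
    fun α => ((b' (h α * α + h α)).card ^ (h α).card).ord with hbdef
  have hbcard : ∀ α, (b α).card = (b' (h α * α + h α)).card ^ (h α).card :=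
    fun α => Cardinal.card_ord _
  have hHpos : ∀ {α}, α < κ.ord → (1:Cardinal) ≤ (h α).card := by
    intro α hα
    rw [Cardinal.one_le_iff_ne_zero, ne_eq, Ordinal.card_eq_zero]
    intro h0
    have := hh1 hα
    rw [h0] at this
    exact absurd this (by simp)
  have hbinf : ∀ {α}, α < κ.ord → ℵ₀ ≤ (b α).card := by
    intro α hα
    rw [hbcard]
    exact le_trans (hb'inf (hblock_lt hα le_rfl)) (Cardinal.self_le_power _ (hHpos hα))
  have hbprop : ∀ α < κ.ord, b α < κ.ord ∧ IsInfCard (b α) := by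
    intro α hα
    refine ⟨?_, ?_, hbinf hα⟩
    · rw [Cardinal.lt_ord, hbcard]
      have hB : (b' (h α * α + h α)).card < κ := Cardinal.lt_ord.1 (hb'lt (hblock_lt hα le_rfl))
      have hH : (h α).card < κ := Cardinal.lt_ord.1 (hhlt hα)
      calc (b' (h α * α + h α)).card ^ (h α).card
          ≤ (2 ^ (b' (h α * α + h α)).card) ^ (h α).card :=
            Cardinal.power_le_power_right (Cardinal.cantor _).le
        _ = 2 ^ ((b' (h α * α + h α)).card * (h α).card) := (Cardinal.power_mul ..).symm
        _ < κ := hκsl (Cardinal.mul_lt_of_lt hℵ hB hH)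
    · simp only [hbdef, Cardinal.card_ord]
  have hbpos : ∀ {α}, α < κ.ord → (0:Ordinal) < b α := by
    intro α hα
    rw [pos_iff_ne_zero, ne_eq, ← Ordinal.card_eq_zero]
    intro h0
    have := hbinf hα
    rw [h0] at this
    exact Cardinal.aleph0_ne_zero (le_antisymm this zero_le)
  have hbinc : IncreasingOn κ.ord b := by
    intro α β hab hβ
    have hα : α < κ.ord := lt_of_le_of_lt hab hβ
    simp only [hbdef]
    rw [Cardinal.ord_le_ord]
    calc (b' (h α * α + h α)).card ^ (h α).card
        ≤ (b' (h β * β + h β)).card ^ (h α).card :=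
          Cardinal.power_le_power_right
            (Ordinal.card_le_card (hb'inc _ _ (hblock_mono hab hβ) (hblock_lt hβ le_rfl)))
      _ ≤ (b' (h β * β + h β)).card ^ (h β).card :=
          Cardinal.power_le_power_left
            (lt_of_lt_of_le Cardinal.aleph0_pos (hb'inf (hblock_lt hβ le_rfl))).ne'
            (Ordinal.card_le_card (hhinc α β hab hβ))
  -- cardinality of the block space
  have hTcard : ∀ α, α < κ.ord →
      #({y : Ordinal.{0} → Ordinal.{0} | InBlock b' h α y}) ≤ #(Iio (b α)) := by
    intro α hα
    have hδ : ∀ {ζ : Ordinal.{0}}, ζ < h α → b' (h α * α + ζ) ≤ b' (h α * α + h α) :=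
      fun hζ => hb'inc _ _ (add_le_add_right hζ.le _) (hblock_lt hα le_rfl)
    have hemb : {y : Ordinal.{0} → Ordinal.{0} | InBlock b' h α y} ↪
        (↥(Iio (h α)) → ↥(Iio (b' (h α * α + h α)))) := by
      refine ⟨fun y ζ => ⟨y.1 ζ.1, lt_of_lt_of_le ((y.2 ζ.1).1 ζ.2) (hδ ζ.2)⟩, ?_⟩
      intro y y' hyy
      apply Subtype.ext
      funext ζ
      by_cases hζ : ζ < h α
      · have := congrFun hyy ⟨ζ, hζ⟩
        exact congrArg Subtype.val this
      · rw [(y.2 ζ).2 hζ, (y'.2 ζ).2 hζ]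
    calc #({y : Ordinal.{0} → Ordinal.{0} | InBlock b' h α y})
        ≤ #(↥(Iio (h α)) → ↥(Iio (b' (h α * α + h α)))) := Cardinal.mk_le_of_injective hemb.2
      _ = #(↥(Iio (b' (h α * α + h α)))) ^ #(↥(Iio (h α))) := (Cardinal.power_def _ _).symm
      _ = Cardinal.lift.{1} (b' (h α * α + h α)).card ^ Cardinal.lift.{1} (h α).card := by
          rw [Ordinal.mk_Iio_ordinal, Ordinal.mk_Iio_ordinal]
      _ = Cardinal.lift.{1} ((b' (h α * α + h α)).card ^ (h α).card) :=
          (Cardinal.lift_power _ _).symm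
      _ = #(Iio (b α)) := by rw [Ordinal.mk_Iio_ordinal, hbcard]
  -- coding and decoding of blocks
  have hEDex : ∀ α : Ordinal.{0}, ∃ (E : (Ordinal.{0} → Ordinal.{0}) → Ordinal.{0})
      (Dd : Ordinal.{0} → (Ordinal.{0} → Ordinal.{0})), α < κ.ord →
      (∀ y, InBlock b' h α y → E y < b α ∧ Dd (E y) = y) ∧
      (∀ x, InBlock b' h α (Dd x)) := by
    intro α
    by_cases hα : α < κ.ord
    · obtain ⟨e⟩ := (Cardinal.le_def _ _).1 (hTcard α hα)
      have hz : InBlock b' h α (fun _ => (0:Ordinal.{0})) := by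
        intro ζ
        exact ⟨fun hζ => hb'pos (hblock_lt hα hζ.le), fun _ => rfl⟩
      refine ⟨fun y => if hy : InBlock b' h α y then (e ⟨y, hy⟩).1 else 0,
        fun x => if hx : ∃ y : ({y : Ordinal.{0} → Ordinal.{0} | InBlock b' h α y} : Set _),
          ((e y).1 : Ordinal.{0}) = x then hx.choose.1 else (fun _ => 0), fun _ => ⟨?_, ?_⟩⟩
      · intro y hy
        dsimp only
        rw [dif_pos hy]
        constructor
        · exact (e ⟨y, hy⟩).2
        · have hcond : ∃ y' : ({y : Ordinal.{0} → Ordinal.{0} | InBlock b' h α y} : Set _),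
              ((e y').1 : Ordinal.{0}) = (e ⟨y, hy⟩).1 := ⟨⟨y, hy⟩, rfl⟩
          rw [dif_pos hcond]
          have h5 : hcond.choose = ⟨y, hy⟩ := e.injective (Subtype.ext hcond.choose_spec)
          rw [h5]
      · intro x
        by_cases hx : ∃ y : ({y : Ordinal.{0} → Ordinal.{0} | InBlock b' h α y} : Set _),
            ((e y).1 : Ordinal.{0}) = x
        · dsimp only; rw [dif_pos hx]; exact hx.choose.2
        · dsimp only; rw [dif_neg hx]; exact hz
    · exact ⟨fun _ => 0, fun _ _ => 0, fun h => absurd h hα⟩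
  choose E Dd hED using hEDex
  -- injections from small sets into Iio (h α)
  have hιex : ∀ (α : Ordinal.{0}) (s : Set Ordinal.{0}), ∃ ι : Ordinal.{0} → Ordinal.{0},
      Cardinal.mk s < Cardinal.lift.{1} (h α).card → (∀ x ∈ s, ι x < h α) ∧ Set.InjOn ι s := by
    intro α s
    by_cases hs : Cardinal.mk s < Cardinal.lift.{1} (h α).card
    · have hle : Cardinal.mk s ≤ #(Iio (h α)) := by rw [Ordinal.mk_Iio_ordinal]; exact hs.le
      obtain ⟨e⟩ := (Cardinal.le_def _ _).1 hle
      refine ⟨fun x => if hx : x ∈ s then (e ⟨x, hx⟩).1 else 0, fun _ => ⟨?_, ?_⟩⟩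
      · intro x hx
        dsimp only
        rw [dif_pos hx]
        exact (e ⟨x, hx⟩).2
      · intro x hx y hy hxy
        dsimp only at hxy
        rw [dif_pos hx, dif_pos hy] at hxy
        have := e.injective (Subtype.ext hxy)
        exact congrArg Subtype.val this
    · exact ⟨fun _ => 0, fun h => absurd h hs⟩
  choose ι hι using hιex
  -- blockwise assembly of functions in ∏ b'
  have assemble : ∀ v : Ordinal.{0} → Ordinal.{0} → Ordinal.{0},
      (∀ α ζ, α < κ.ord → ζ < h α → v α ζ < b' (h α * α + ζ)) →
      ∃ f ∈ prodSet κ.ord b', ∀ α ζ, α < κ.ord → ζ < h α → f (h α * α + ζ) = v α ζ := by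
    intro v hv
    refine ⟨fun i => if hi : ∃ p : Ordinal.{0} × Ordinal.{0},
        p.1 < κ.ord ∧ p.2 < h p.1 ∧ i = h p.1 * p.1 + p.2
        then v hi.choose.1 hi.choose.2 else 0, ?_, ?_⟩
    · intro i
      constructor
      · intro hilt
        by_cases hi : ∃ p : Ordinal.{0} × Ordinal.{0},
            p.1 < κ.ord ∧ p.2 < h p.1 ∧ i = h p.1 * p.1 + p.2
        · dsimp only
          rw [dif_pos hi]
          obtain ⟨hp1, hp2, hp3⟩ := hi.choose_spec
          have := hv _ _ hp1 hp2
          rwa [← hp3] at this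
        · dsimp only
          rw [dif_neg hi]
          exact hb'pos hilt
      · intro hige
        dsimp only
        rw [dif_neg]
        rintro ⟨p, hp1, hp2, rfl⟩
        exact hige (hblock_lt hp1 hp2.le)
    · intro α ζ hα hζ
      have hcond : ∃ p : Ordinal.{0} × Ordinal.{0},
          p.1 < κ.ord ∧ p.2 < h p.1 ∧ h α * α + ζ = h p.1 * p.1 + p.2 := ⟨(α, ζ), hα, hζ, rfl⟩
      dsimp only
      rw [dif_pos hcond]
      obtain ⟨hp1, hp2, hp3⟩ := hcond.choose_spec
      obtain ⟨he1, he2⟩ := hblock_unique hα hp1 hζ hp2 hp3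
      rw [← he1, ← he2]
  -- the minus map: coding slaloms into ∏ b'
  have hfmEx : ∀ φ, φ ∈ slalomSet κ.ord b h → ∃ f, f ∈ prodSet κ.ord b' ∧
      ∀ α, α < κ.ord → ∀ x ∈ φ α, f (h α * α + ι α (φ α) x) = Dd α x (ι α (φ α) x) := by
    intro φ hφs
    have hφα : ∀ {α}, α < κ.ord → #(φ α) < Cardinal.lift.{1} (h α).card :=
      fun {α} hα => ((hφs α).1 hα).2
    have hvlt : ∀ α ζ : Ordinal.{0}, α < κ.ord → ζ < h α →
        (if hα : α < κ.ord then
          (if hx : ∃ x ∈ φ α, ι α (φ α) x = ζ then Dd α hx.choose ζ else 0) else 0)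
          < b' (h α * α + ζ) := by
      intro α ζ hα hζ
      rw [dif_pos hα]
      by_cases hx : ∃ x ∈ φ α, ι α (φ α) x = ζ
      · rw [dif_pos hx]
        exact ((hED α hα).2 _ ζ).1 hζ
      · rw [dif_neg hx]
        exact hb'pos (hblock_lt hα hζ.le)
    obtain ⟨f, hf1, hf2⟩ := assemble
      (fun α ζ => if hα : α < κ.ord then
        (if hx : ∃ x ∈ φ α, ι α (φ α) x = ζ then Dd α hx.choose ζ else 0) else 0) hvlt
    refine ⟨f, hf1, ?_⟩
    intro α hα x hx
    have hζ : ι α (φ α) x < h α := (hι α (φ α) (hφα hα)).1 x hx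
    rw [hf2 α _ hα hζ]
    have hcond : ∃ x' ∈ φ α, ι α (φ α) x' = ι α (φ α) x := ⟨x, hx, rfl⟩
    rw [dif_pos hα, dif_pos hcond]
    obtain ⟨hc1, hc2⟩ := hcond.choose_spec
    have : hcond.choose = x := (hι α (φ α) (hφα hα)).2 hc1 hx hc2
    rw [this]
  obtain ⟨fm, hfm⟩ : ∃ fm : (Ordinal.{0} → Set Ordinal.{0}) → (Ordinal.{0} → Ordinal.{0}),
      ∀ φ, φ ∈ slalomSet κ.ord b h → fm φ ∈ prodSet κ.ord b' ∧
        ∀ α, α < κ.ord → ∀ x ∈ φ α,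
          fm φ (h α * α + ι α (φ α) x) = Dd α x (ι α (φ α) x) := by
    choose fm hfm1 hfm2 using hfmEx
    exact ⟨fun φ => if hφs : φ ∈ slalomSet κ.ord b h then fm φ hφs else fun _ => 0,
      fun φ hφs => by dsimp only; rw [dif_pos hφs]; exact ⟨hfm1 φ hφs, hfm2 φ hφs⟩⟩
  -- the plus map: decoding elements of ∏ b' to elements of ∏ b
  obtain ⟨pm, hpm1, hpm2⟩ : ∃ pm : (Ordinal.{0} → Ordinal.{0}) → (Ordinal.{0} → Ordinal.{0}),
      (∀ g ∈ prodSet κ.ord b', pm g ∈ prodSet κ.ord b) ∧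
      (∀ g α, α < κ.ord → pm g α = E α (fun ζ => if ζ < h α then g (h α * α + ζ) else 0)) := by
    refine ⟨fun g α => if hα : α < κ.ord
        then E α (fun ζ => if ζ < h α then g (h α * α + ζ) else 0) else 0, ?_, ?_⟩
    · intro g hg α
      constructor
      · intro hα
        have hyg : InBlock b' h α (fun ζ => if ζ < h α then g (h α * α + ζ) else 0) := by
          intro ζ
          constructor
          · intro hζ
            simp only [if_pos hζ]
            exact (hg _).1 (hblock_lt hα hζ.le)
          · intro hζ
            simp only [if_neg hζ]
        show (if hα : α < κ.ord then _ else 0) < b α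
        rw [dif_pos hα]
        exact ((hED α hα).1 _ hyg).1
      · intro hα
        exact dif_neg hα
    · intro g α hα
      dsimp only
      rw [dif_pos hα]
  -- the membership of blocks for members of ∏ b'
  have hblk : ∀ g ∈ prodSet κ.ord b', ∀ α, α < κ.ord →
      InBlock b' h α (fun ζ => if ζ < h α then g (h α * α + ζ) else 0) := by
    intro g hg α hα ζ
    constructor
    · intro hζ
      simp only [if_pos hζ]
      exact (hg _).1 (hblock_lt hα hζ.le)
    · intro hζ
      simp only [if_neg hζ]
  -- the Tukey connection
  have hTuk : Tukey (slalomSet κ.ord b h) (prodSet κ.ord b) (notInStar κ.ord)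
      (prodSet κ.ord b') (prodSet κ.ord b') (neStar κ.ord) := by
    refine ⟨fm, pm, fun φ hφs => (hfm φ hφs).1, hpm1, ?_⟩
    rintro φ hφs g hg ⟨β, hβ, hall⟩
    refine ⟨β, hβ, ?_⟩
    intro α hβα hα hmem
    have hφα : #(φ α) < Cardinal.lift.{1} (h α).card := ((hφs α).1 hα).2
    set yg : Ordinal.{0} → Ordinal.{0} := fun ζ => if ζ < h α then g (h α * α + ζ) else 0
      with hygdef
    have hyg : InBlock b' h α yg := hblk g hg α hα
    have hpmα : pm g α = E α yg := hpm2 g α hα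
    rw [hpmα] at hmem
    set ζ := ι α (φ α) (E α yg) with hζdef
    have hζ : ζ < h α := (hι α (φ α) hφα).1 _ hmem
    have hfmval : fm φ (h α * α + ζ) = Dd α (E α yg) ζ := (hfm φ hφs).2 α hα _ hmem
    have hDdE : Dd α (E α yg) = yg := ((hED α hα).1 yg hyg).2
    have hgval : fm φ (h α * α + ζ) = g (h α * α + ζ) := by
      rw [hfmval, hDdE]
      show (if ζ < h α then g (h α * α + ζ) else 0) = g (h α * α + ζ)
      exact if_pos hζ
    have hgt : β < h α * α + ζ :=
      lt_of_lt_of_le hβα (le_trans (hα_le_block hα) le_self_add)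
    have hlt : h α * α + ζ < κ.ord := hblock_lt hα hζ.le
    exact hall _ hgt hlt hgval
  refine ⟨b, hbinc, hbprop, hTuk, ?_, ?_⟩
  · -- dAntiLoc ≤ dNeq
    apply normOf_le_of_tukey hTuk
    refine ⟨prodSet κ.ord b', subset_rfl, ?_⟩
    intro f hf
    refine ⟨fun i => if i < κ.ord then (if f i = 0 then 1 else 0) else 0, ?_, ?_⟩
    · intro i
      constructor
      · intro hi
        simp only [if_pos hi]
        split_ifs
        · exact hb'one hi
        · exact hb'pos hi
      · intro hi
        simp only [if_neg hi]
    · refine ⟨0, hκopos, ?_⟩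
      intro α h0 hα
      simp only [if_pos hα]
      split_ifs with hf0
      · rw [hf0]; exact zero_ne_one
      · exact hf0
  · -- bNeq ≤ bAntiLoc
    obtain ⟨ρm, ρp, hm, hp, himp⟩ := hTuk
    have hTuk2 : Tukey (prodSet κ.ord b') (prodSet κ.ord b')
        (fun g f => eqInfty κ.ord g f)
        (prodSet κ.ord b) (slalomSet κ.ord b h) (inInfty κ.ord) := by
      refine ⟨ρp, ρm, hp, hm, ?_⟩
      intro g hg φ hφ hin
      have h1 : ¬ notInStar κ.ord φ (ρp g) := cofinally_not_almostAll hin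
      have h2 : ¬ neStar κ.ord (ρm φ) g := fun hne => h1 (himp φ hφ g hg hne)
      have h3 := not_almostAll_iff.1 h2
      intro β hβ
      obtain ⟨α, ha1, ha2, ha3⟩ := h3 β hβ
      exact ⟨α, ha1, ha2, (not_not.1 ha3).symm⟩
    apply normOf_le_of_tukey hTuk2
    refine ⟨slalomSet κ.ord b h, subset_rfl, ?_⟩
    intro f hf
    refine ⟨fun α => if α < κ.ord then {f α} else ∅, ?_, ?_⟩
    · intro α
      constructor
      · intro hα
        simp only [if_pos hα]
        refine ⟨?_, ?_⟩
        · intro x hx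
          rw [mem_singleton_iff] at hx
          rw [hx]
          exact mem_Iio.2 ((hf α).1 hα)
        · rw [Cardinal.mk_singleton]
          calc (1:Cardinal.{1}) < 2 := one_lt_two
            _ = Cardinal.lift.{1} ((2:ℕ):Cardinal.{0}) := by simp
            _ ≤ Cardinal.lift.{1} (h α).card := by
                apply Cardinal.lift_le.2
                have := Ordinal.card_le_card (hh2 hα)
                rwa [show ((2:Ordinal.{0}).card) = ((2:ℕ):Cardinal.{0}) by simp] at this
      · intro hα
        simp only [if_neg hα]
    · intro β hβ
      have hsucc : β + 1 < κ.ord := by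
        rw [Ordinal.add_one_eq_succ]
        exact hκolim.succ_lt hβ
      refine ⟨β + 1, ?_, hsucc, ?_⟩
      · rw [Ordinal.add_one_eq_succ]
        exact Order.lt_succ β
      · simp only [if_pos hsucc]
        exact mem_singleton _


end BGBS
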